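/- The formula ¬□⊥ → (¬¬□p → □¬¬p), for a propositional variable p, is derivable in CK ⊕ N_◇□ ⊕ I_◇□ (i.e. ∅ ⊢_{CK ⊕ N_◇□ ⊕ I_◇□} ¬□⊥ → (¬¬□p → □¬¬p)), but it is not derivable in CK. -/
import Mathlib


/-- Formulas of the modal language L. -/
inductive Form : Type
  | var : ℕ → Form
  | bot : Form
  | and : Form → Form → Form
  | or : Form → Form → Form
  | imp : Form → Form → Form
  | box : Form → Form
  | dia : Form → Form

namespace Form

/-- Negation abbreviation: ¬φ := φ → ⊥. -/
def neg (φ : Form) : Form := φ.imp bot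

/-- Uniform substitution. -/
def subst (σ : ℕ → Form) : Form → Form
  | var p => σ p
  | bot => bot
  | and a b => and (a.subst σ) (b.subst σ)
  | or a b => or (a.subst σ) (b.subst σ)
  | imp a b => imp (a.subst σ) (b.subst σ)
  | box a => box (a.subst σ)
  | dia a => dia (a.subst σ)

end Form

/-- Substitution instances of the axioms of a standard Hilbert axiomatisation
of intuitionistic propositional logic (the axioms are schematic, so all
substitution instances are included). -/
inductive IPLAx : Form → Prop
  | a1 (φ ψ : Form) : IPLAx (φ.imp (ψ.imp φ))
  | a2 (φ ψ χ : Form) : IPLAx ((φ.imp (ψ.imp χ)).imp ((φ.imp ψ).imp (φ.imp χ)))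
  | a3 (φ ψ : Form) : IPLAx ((φ.and ψ).imp φ)
  | a4 (φ ψ : Form) : IPLAx ((φ.and ψ).imp ψ)
  | a5 (φ ψ : Form) : IPLAx (φ.imp (ψ.imp (φ.and ψ)))
  | a6 (φ ψ : Form) : IPLAx (φ.imp (φ.or ψ))
  | a7 (φ ψ : Form) : IPLAx (ψ.imp (φ.or ψ))
  | a8 (φ ψ χ : Form) : IPLAx ((φ.imp χ).imp ((ψ.imp χ).imp ((φ.or ψ).imp χ)))
  | a9 (φ : Form) : IPLAx (Form.bot.imp φ)

/-- Substitution instances of K_□ : □(φ→ψ) → (□φ → □ψ). -/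
def KBoxAx (χ : Form) : Prop :=
  ∃ φ ψ : Form, χ = ((φ.imp ψ).box).imp ((φ.box).imp (ψ.box))

/-- Substitution instances of K_◇ : □(φ→ψ) → (◇φ → ◇ψ). -/
def KDiaAx (χ : Form) : Prop :=
  ∃ φ ψ : Form, χ = ((φ.imp ψ).box).imp ((φ.dia).imp (ψ.dia))

/-- Axiom instances available in the calculus CK ⊕ Ax : instances of IPL
axioms, of K_□, of K_◇, or substitution instances of members of Ax. -/
def AxInst (Ax : Set Form) (φ : Form) : Prop :=
  IPLAx φ ∨ KBoxAx φ ∨ KDiaAx φ ∨ ∃ ψ ∈ Ax, ∃ σ : ℕ → Form, φ = ψ.subst σ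

/-- The generalised Hilbert calculus CK ⊕ Ax deriving consecutions Γ ⊢_Ax φ:
rules (Ax), (MP), (Nec) and (El). -/
inductive Prv (Ax : Set Form) : Set Form → Form → Prop
  | ax {Γ : Set Form} {φ : Form} : AxInst Ax φ → Prv Ax Γ φ
  | mp {Γ : Set Form} {φ ψ : Form} : Prv Ax Γ φ → Prv Ax Γ (φ.imp ψ) → Prv Ax Γ ψ
  | nec {Γ : Set Form} {φ : Form} : Prv Ax ∅ φ → Prv Ax Γ φ.box
  | el {Γ : Set Form} {φ : Form} : φ ∈ Γ → Prv Ax Γ φ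

/-- The axiom N_◇ : ◇⊥ → ⊥. -/
def NdAx : Form := (Form.bot.dia).imp Form.bot

/-- The axiom N_◇□ : ◇⊥ → □⊥. -/
def NdbAx : Form := (Form.bot.dia).imp (Form.bot.box)

/-- The axiom C_◇ : ◇(p ∨ q) → ◇p ∨ ◇q. -/
def CdAx : Form :=
  (((Form.var 0).or (Form.var 1)).dia).imp (((Form.var 0).dia).or ((Form.var 1).dia))

/-- The axiom I_◇□ : (◇p → □q) → □(p → q). -/
def IdbAx : Form :=
  (((Form.var 0).dia).imp ((Form.var 1).box)).imp (((Form.var 0).imp (Form.var 1)).box)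


/-! ### Auxiliary material -/

open Form

/-- Shortcut: IPL axiom instances. -/
def Prv.ipl {Ax : Set Form} {Γ : Set Form} {φ : Form} (h : IPLAx φ) : Prv Ax Γ φ :=
  Prv.ax (Or.inl h)

/-- φ → φ is derivable. -/
theorem Prv.impId (Ax : Set Form) (Γ : Set Form) (φ : Form) : Prv Ax Γ (φ.imp φ) :=
  Prv.mp (Prv.ipl (IPLAx.a1 φ φ))
    (Prv.mp (Prv.ipl (IPLAx.a1 φ (φ.imp φ))) (Prv.ipl (IPLAx.a2 φ (φ.imp φ) φ)))

/-- Deduction theorem, auxiliary form. -/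
theorem Prv.ded_aux {Ax : Set Form} {Δ : Set Form} {ψ : Form} (h : Prv Ax Δ ψ) :
    ∀ {Γ : Set Form} {φ : Form}, Δ = insert φ Γ → Prv Ax Γ (φ.imp ψ) := by
  induction h with
  | ax ha =>
    intro Γ φ _
    exact Prv.mp (Prv.ax ha) (Prv.ipl (IPLAx.a1 _ _))
  | mp h1 h2 ih1 ih2 =>
    intro Γ φ heq
    exact Prv.mp (ih1 heq) (Prv.mp (ih2 heq) (Prv.ipl (IPLAx.a2 _ _ _)))
  | nec h ih =>
    intro Γ φ _
    exact Prv.mp (Prv.nec h) (Prv.ipl (IPLAx.a1 _ _))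
  | el hx =>
    intro Γ φ heq
    subst heq
    rcases hx with rfl | hx
    · exact Prv.impId Ax Γ _
    · exact Prv.mp (Prv.el hx) (Prv.ipl (IPLAx.a1 _ _))

/-- Deduction theorem. -/
theorem Prv.ded {Ax : Set Form} {Γ : Set Form} {φ ψ : Form}
    (h : Prv Ax (insert φ Γ) ψ) : Prv Ax Γ (φ.imp ψ) :=
  Prv.ded_aux h rfl

/-! ### A six-element Heyting algebra with a box operator, for the countermodel -/

/-- Carrier: the upsets of the poset {w0 < w1, w2}. -/
inductive H : Type
  | e0 | e1 | e2 | e3 | e4 | e5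
deriving DecidableEq

instance : Fintype H :=
  ⟨⟨{H.e0, H.e1, H.e2, H.e3, H.e4, H.e5}, by decide⟩, fun x => by cases x <;> decide⟩

namespace H

/-- Membership of world w0. -/
def m0 : H → Bool
  | e4 => true | e5 => true | _ => false

/-- Membership of world w1. -/
def m1 : H → Bool
  | e1 => true | e3 => true | e4 => true | e5 => true | _ => false

/-- Membership of world w2. -/
def m2 : H → Bool
  | e2 => true | e3 => true | e5 => true | _ => false

/-- Reconstruct an element from the memberships. -/
def mk (a b c : Bool) : H :=
  match a, b, c with
  | false, false, false => e0
  | false, true,  false => e1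
  | false, false, true  => e2
  | false, true,  true  => e3
  | true,  _,     false => e4
  | true,  _,     true  => e5

def meet (x y : H) : H := mk (m0 x && m0 y) (m1 x && m1 y) (m2 x && m2 y)
def join (x y : H) : H := mk (m0 x || m0 y) (m1 x || m1 y) (m2 x || m2 y)
def himp (x y : H) : H :=
  mk ((!m0 x || m0 y) && (!m1 x || m1 y)) (!m1 x || m1 y) (!m2 x || m2 y)

/-- Box operator induced by the modal relation R = {(w0,w2),(w1,w1),(w2,w2)}. -/
def bx (x : H) : H := mk (m2 x && m1 x) (m1 x) (m2 x)

end H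

/-- The evaluation: all variables get e4 = {w0,w1}, diamond is constant top. -/
def heval : Form → H
  | Form.var _ => H.e4
  | Form.bot => H.e0
  | Form.and a b => H.meet (heval a) (heval b)
  | Form.or a b => H.join (heval a) (heval b)
  | Form.imp a b => H.himp (heval a) (heval b)
  | Form.box a => H.bx (heval a)
  | Form.dia _ => H.e5

/-- Soundness of the evaluation for CK. -/
theorem heval_sound {Γ : Set Form} {φ : Form} (h : Prv ∅ Γ φ) :
    (∀ ψ ∈ Γ, heval ψ = H.e5) → heval φ = H.e5 := by
  induction h with
  | @ax Γ φ ha =>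
    intro _
    rcases ha with ha | ha | ha | ⟨ψ, hψ, _⟩
    · cases ha with
      | a1 φ ψ =>
        simp only [heval]
        exact (by decide : ∀ a b : H, H.himp a (H.himp b a) = H.e5) _ _
      | a2 φ ψ χ =>
        simp only [heval]
        exact (by decide : ∀ a b c : H,
          H.himp (H.himp a (H.himp b c)) (H.himp (H.himp a b) (H.himp a c)) = H.e5) _ _ _
      | a3 φ ψ =>
        simp only [heval]
        exact (by decide : ∀ a b : H, H.himp (H.meet a b) a = H.e5) _ _
      | a4 φ ψ =>
        simp only [heval]
        exact (by decide : ∀ a b : H, H.himp (H.meet a b) b = H.e5) _ _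
      | a5 φ ψ =>
        simp only [heval]
        exact (by decide : ∀ a b : H, H.himp a (H.himp b (H.meet a b)) = H.e5) _ _
      | a6 φ ψ =>
        simp only [heval]
        exact (by decide : ∀ a b : H, H.himp a (H.join a b) = H.e5) _ _
      | a7 φ ψ =>
        simp only [heval]
        exact (by decide : ∀ a b : H, H.himp b (H.join a b) = H.e5) _ _
      | a8 φ ψ χ =>
        simp only [heval]
        exact (by decide : ∀ a b c : H,
          H.himp (H.himp a c) (H.himp (H.himp b c) (H.himp (H.join a b) c)) = H.e5) _ _ _
      | a9 φ =>
        simp only [heval]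
        exact (by decide : ∀ a : H, H.himp H.e0 a = H.e5) _
    · obtain ⟨a, b, rfl⟩ := ha
      simp only [heval]
      exact (by decide : ∀ x y : H,
        H.himp (H.bx (H.himp x y)) (H.himp (H.bx x) (H.bx y)) = H.e5) _ _
    · obtain ⟨a, b, rfl⟩ := ha
      simp only [heval]
      exact (by decide : ∀ x y : H, H.himp (H.bx (H.himp x y)) (H.himp H.e5 H.e5) = H.e5) _ _
    · exact absurd hψ (Set.notMem_empty ψ)
  | mp h1 h2 ih1 ih2 =>
    intro hΓ
    exact (by decide : ∀ x y : H, x = H.e5 → H.himp x y = H.e5 → y = H.e5)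
      _ _ (ih1 hΓ) (ih2 hΓ)
  | nec h ih =>
    intro _
    have := ih (fun ψ hψ => absurd hψ (Set.notMem_empty ψ))
    simp only [heval, this]
    decide
  | el hx =>
    intro hΓ
    exact hΓ _ hx

/-- The formula ¬□⊥ → (¬¬□p → □¬¬p) is derivable in CK ⊕ N_◇□ ⊕ I_◇□ but
not in CK. -/
theorem ndb_idb_formula :
    Prv {NdbAx, IdbAx} ∅
      (((Form.bot.box).neg).imp
        (((((Form.var 0).box).neg).neg).imp (((Form.var 0).neg.neg).box))) ∧
    ¬ Prv ∅ ∅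
      (((Form.bot.box).neg).imp
        (((((Form.var 0).box).neg).neg).imp (((Form.var 0).neg.neg).box))) := by
  constructor
  · -- Derivability in CK ⊕ N_◇□ ⊕ I_◇□
    set p : Form := Form.var 0 with hp
    apply Prv.ded
    apply Prv.ded
    -- Context Γ0 = {¬¬□p, ¬□⊥}
    set A : Form := (Form.bot.box).neg with hA
    set B : Form := (((Form.var 0).box).neg).neg with hB
    set Γ0 : Set Form := insert B (insert A ∅) with hΓ0
    -- Instance of I_◇□ with σ 0 = ¬p, σ 1 = ⊥
    have hI : Prv {NdbAx, IdbAx} Γ0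
        (((p.neg.dia).imp (Form.bot.box)).imp ((p.neg.imp Form.bot).box)) := by
      apply Prv.ax
      refine Or.inr (Or.inr (Or.inr ⟨IdbAx, by simp, fun n => if n = 0 then p.neg else Form.bot, ?_⟩))
      rfl
    have hmain : Prv {NdbAx, IdbAx} Γ0 ((p.neg.dia).imp (Form.bot.box)) := by
      apply Prv.ded
      set Γ1 : Set Form := insert (p.neg.dia) Γ0 with hΓ1
      -- closed: ⊢ p → (¬p → ⊥)
      have hcl : Prv ({NdbAx, IdbAx} : Set Form) ∅ (p.imp (p.neg.imp Form.bot)) := by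
        apply Prv.ded
        apply Prv.ded
        exact Prv.mp (Prv.el (by simp)) (Prv.el (Set.mem_insert _ _))
      -- under additional hypothesis □p, derive ⊥
      have h2 : Prv {NdbAx, IdbAx} (insert (p.box) Γ1) Form.bot := by
        set Γ2 : Set Form := insert (p.box) Γ1 with hΓ2
        have hb1 : Prv {NdbAx, IdbAx} Γ2 ((p.imp (p.neg.imp Form.bot)).box) := Prv.nec hcl
        have hk1 : Prv {NdbAx, IdbAx} Γ2
            (((p.imp (p.neg.imp Form.bot)).box).imp ((p.box).imp ((p.neg.imp Form.bot).box))) :=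
          Prv.ax (Or.inr (Or.inl ⟨p, p.neg.imp Form.bot, rfl⟩))
        have hb2 : Prv {NdbAx, IdbAx} Γ2 ((p.neg.imp Form.bot).box) :=
          Prv.mp (Prv.el (Set.mem_insert _ _)) (Prv.mp hb1 hk1)
        have hk2 : Prv {NdbAx, IdbAx} Γ2
            (((p.neg.imp Form.bot).box).imp ((p.neg.dia).imp (Form.bot.dia))) :=
          Prv.ax (Or.inr (Or.inr (Or.inl ⟨p.neg, Form.bot, rfl⟩)))
        have hdb : Prv {NdbAx, IdbAx} Γ2 (Form.bot.dia) :=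
          Prv.mp (Prv.el (by simp [hΓ2, hΓ1])) (Prv.mp hb2 hk2)
        have hndb : Prv {NdbAx, IdbAx} Γ2 ((Form.bot.dia).imp (Form.bot.box)) := by
          apply Prv.ax
          exact Or.inr (Or.inr (Or.inr ⟨NdbAx, by simp, fun _ => Form.bot, rfl⟩))
        have hbb : Prv {NdbAx, IdbAx} Γ2 (Form.bot.box) := Prv.mp hdb hndb
        have hAin : Prv {NdbAx, IdbAx} Γ2 ((Form.bot.box).imp Form.bot) := by
          have : A ∈ Γ2 := by simp [hΓ2, hΓ1, hΓ0]
          exact Prv.el this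
        exact Prv.mp hbb hAin
      have h3 : Prv {NdbAx, IdbAx} Γ1 ((p.box).imp Form.bot) := Prv.ded h2
      have hBin : Prv {NdbAx, IdbAx} Γ1 (((p.box).imp Form.bot).imp Form.bot) := by
        have : B ∈ Γ1 := by simp [hΓ1, hΓ0]
        exact Prv.el this
      have hbot : Prv {NdbAx, IdbAx} Γ1 Form.bot := Prv.mp h3 hBin
      exact Prv.mp hbot (Prv.ipl (IPLAx.a9 _))
    exact Prv.mp hmain hI
  · -- Non-derivability in CK
    intro h
    have := heval_sound h (fun ψ hψ => absurd hψ (Set.notMem_empty ψ))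
    revert this
    decide
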